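/- arXiv:1311.3164 — 3 statements merged into one kernel-verified Lean document; each statement's English description precedes it below -/
import Mathlib

section
/- The assignment Sq^1 ↦ 1 ⊗ Sq^1 + i1 ⊗ 1 and Sq^2 ↦ 1 ⊗ Sq^2 + i1 ⊗ Sq^1 + i1^2 ⊗ 1 + i2 ⊗ 1 extends uniquely to an algebra homomorphism φ: A(1) → U from the subalgebra A(1) of the Steenrod algebra generated by Sq^1 and Sq^2 to the twisted Steenrod algebra U. -/
/-- The defining relations of `A(1)`: `(Sq¹)² = 0` and `Sq¹Sq²Sq¹ = (Sq²)²`. -/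
inductive A1Rel : FreeAlgebra (ZMod 2) (Fin 2) → FreeAlgebra (ZMod 2) (Fin 2) → Prop
  | sq1_sq1 : A1Rel (FreeAlgebra.ι (ZMod 2) (0 : Fin 2) * FreeAlgebra.ι (ZMod 2) (0 : Fin 2)) 0
  | adem : A1Rel
      (FreeAlgebra.ι (ZMod 2) (0 : Fin 2) * FreeAlgebra.ι (ZMod 2) (1 : Fin 2) *
        FreeAlgebra.ι (ZMod 2) (0 : Fin 2))
      (FreeAlgebra.ι (ZMod 2) (1 : Fin 2) * FreeAlgebra.ι (ZMod 2) (1 : Fin 2))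

/-- The subalgebra `A(1)` of the mod 2 Steenrod algebra, presented by generators
`Sq¹, Sq²` and the relations `(Sq¹)² = 0`, `Sq¹Sq²Sq¹ = (Sq²)²`. -/
abbrev A1 : Type := RingQuot A1Rel

/-- The generator `Sq¹` of `A(1)`. -/
noncomputable def A1.Sq1 : A1 := RingQuot.mkAlgHom (ZMod 2) A1Rel (FreeAlgebra.ι (ZMod 2) 0)

/-- The generator `Sq²` of `A(1)`. -/
noncomputable def A1.Sq2 : A1 := RingQuot.mkAlgHom (ZMod 2) A1Rel (FreeAlgebra.ι (ZMod 2) 1)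

/-- The assignment `Sq¹ ↦ 1 ⊗ Sq¹ + i1 ⊗ 1`,
`Sq² ↦ 1 ⊗ Sq² + i1 ⊗ Sq¹ + i1² ⊗ 1 + i2 ⊗ 1` extends uniquely to an algebra
homomorphism `φ : A(1) → U` into the twisted Steenrod algebra `U`
(flattened model as in Statements 1 and 2). -/
theorem exists_unique_phi (U : Type) [Ring U] [Algebra (ZMod 2) U]
    (sq1 sq2 sq3 i1 i2 s12 : U)
    (hcomm12 : i1 * i2 = i2 * i1)
    (hcomm1s : i1 * s12 = s12 * i1)
    (hcomm2s : i2 * s12 = s12 * i2)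
    (hsq1i1 : sq1 * i1 = i1 ^ 2 + i1 * sq1)
    (hsq1i2 : sq1 * i2 = s12 + i2 * sq1)
    (hsq1s12 : sq1 * s12 = s12 * sq1)
    (hsq2i1 : sq2 * i1 = i1 ^ 2 * sq1 + i1 * sq2)
    (hsq2i2 : sq2 * i2 = i2 ^ 2 + s12 * sq1 + i2 * sq2)
    (adem11 : sq1 * sq1 = 0)
    (adem12 : sq1 * sq2 = sq3)
    (adem22 : sq2 * sq2 = sq3 * sq1) :
    ∃! φ : A1 →ₐ[ZMod 2] U,
      φ A1.Sq1 = sq1 + i1 ∧ φ A1.Sq2 = sq2 + i1 * sq1 + i1 ^ 2 + i2 := by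
  have h20 : (2 : U) = 0 := by
    have h := map_ofNat (algebraMap (ZMod 2) U) 2
    rw [show ((OfNat.ofNat 2 : ZMod 2)) = 0 from rfl, map_zero] at h
    exact h.symm
  have h2 : ∀ u : U, u + u = 0 := fun u => by rw [← two_mul, h20, zero_mul]
  have h2' : ∀ u v : U, u + (u + v) = v := fun u v => by
    rw [← add_assoc, h2, zero_add]
  have hR : ∀ {a b c : U}, a * b = c → ∀ r : U, a * (b * r) = c * r := by
    intro a b c h r; rw [← mul_assoc, h]
  rw [pow_two] at hsq1i1 hsq2i1 hsq2i2
  have hc12 := hcomm12.symm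
  have hc1s := hcomm1s.symm
  have hc2s := hcomm2s.symm
  have hsq3i1 : sq3 * i1 = i1 * sq3 + i1 * (i1 * sq2) := by
    have h1 : sq3 * i1 = sq1 * (sq2 * i1) := by rw [← adem12, mul_assoc]
    rw [h1, hsq2i1]
    simp only [mul_add, add_mul, mul_assoc, hR hsq1i1, hsq1i1, hR adem11, adem11,
      hR adem12, adem12, mul_zero, zero_mul, add_zero, zero_add, h2, h2',
      add_comm, add_left_comm, add_assoc]
  have key1 : (sq1 + i1) * (sq1 + i1) = 0 := by
    simp only [mul_add, add_mul, mul_assoc, adem11, adem12, adem22, hsq1i1, hsq1i2, hsq1s12,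
      hsq2i1, hsq2i2, hsq3i1, hc12, hc1s, hc2s,
      hR adem11, hR adem12, hR adem22, hR hsq1i1, hR hsq1i2, hR hsq1s12, hR hsq2i1, hR hsq2i2,
      hR hsq3i1, hR hc12, hR hc1s, hR hc2s,
      mul_zero, zero_mul, add_zero, zero_add, h2, h2', add_comm, add_left_comm, add_assoc]
  have key2 : (sq1 + i1) * (sq2 + i1 * sq1 + i1 * i1 + i2) * (sq1 + i1)
      = (sq2 + i1 * sq1 + i1 * i1 + i2) * (sq2 + i1 * sq1 + i1 * i1 + i2) := by
    simp only [mul_add, add_mul, mul_assoc, adem11, adem12, adem22, hsq1i1, hsq1i2, hsq1s12,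
      hsq2i1, hsq2i2, hsq3i1, hc12, hc1s, hc2s,
      hR adem11, hR adem12, hR adem22, hR hsq1i1, hR hsq1i2, hR hsq1s12, hR hsq2i1, hR hsq2i2,
      hR hsq3i1, hR hc12, hR hc1s, hR hc2s,
      mul_zero, zero_mul, add_zero, zero_add, h2, h2', add_comm, add_left_comm, add_assoc]
  set f : Fin 2 → U := ![sq1 + i1, sq2 + i1 * sq1 + i1 * i1 + i2] with hf
  set g : FreeAlgebra (ZMod 2) (Fin 2) →ₐ[ZMod 2] U := FreeAlgebra.lift (ZMod 2) f with hg
  have hg0 : g (FreeAlgebra.ι (ZMod 2) (0 : Fin 2)) = sq1 + i1 := by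
    rw [hg, FreeAlgebra.lift_ι_apply]; rfl
  have hg1 : g (FreeAlgebra.ι (ZMod 2) (1 : Fin 2)) = sq2 + i1 * sq1 + i1 * i1 + i2 := by
    rw [hg, FreeAlgebra.lift_ι_apply]; rfl
  have hrel : ∀ ⦃x y⦄, A1Rel x y → g x = g y := by
    intro x y h
    cases h with
    | sq1_sq1 => rw [map_mul, map_zero, hg0]; exact key1
    | adem => rw [map_mul, map_mul, map_mul, hg0, hg1]; exact key2
  refine ⟨RingQuot.liftAlgHom (ZMod 2) ⟨g, hrel⟩, ⟨?_, ?_⟩, ?_⟩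
  · rw [A1.Sq1, RingQuot.liftAlgHom_mkAlgHom_apply]; exact hg0
  · rw [A1.Sq2, RingQuot.liftAlgHom_mkAlgHom_apply, hg1, pow_two]
  · rintro ψ ⟨hψ1, hψ2⟩
    apply RingQuot.ringQuot_ext'
    apply FreeAlgebra.hom_ext
    funext i
    fin_cases i
    · simp only [Function.comp_apply, AlgHom.coe_comp]
      simp only [Fin.zero_eta, Fin.mk_one]
      rw [show ψ ((RingQuot.mkAlgHom (ZMod 2) A1Rel) (FreeAlgebra.ι (ZMod 2) (0 : Fin 2)))
        = sq1 + i1 from hψ1]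
      rw [RingQuot.liftAlgHom_mkAlgHom_apply]
      exact hg0.symm
    · simp only [Function.comp_apply, AlgHom.coe_comp]
      simp only [Fin.zero_eta, Fin.mk_one]
      rw [show ψ ((RingQuot.mkAlgHom (ZMod 2) A1Rel) (FreeAlgebra.ι (ZMod 2) (1 : Fin 2)))
        = sq2 + i1 * sq1 + i1 ^ 2 + i2 from hψ2]
      rw [RingQuot.liftAlgHom_mkAlgHom_apply, hg1, pow_two]
end

section
/- For every a in A(1) and l in R, the identity φ(a)·(l ⊗ 1) = Σ (a'(l) ⊗ 1)·φ(a'') holds in the twisted Steenrod algebra, where Δ(a) = Σ a' ⊗ a''. In particular, the extension of φ by the identity on R, φ(k ⊗ a) := (k ⊗ 1)·φ(a), is multiplicative: φ((k⊗a)(l⊗b)) = φ(k⊗a)·φ(l⊗b). -/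
open TensorProduct

/-- The lifted action `H ⊗ R →ₗ R` of a bialgebra `H` on an algebra `R`. -/
noncomputable def actT (R H : Type) [CommRing R] [Algebra (ZMod 2) R]
    [Ring H] [HopfAlgebra (ZMod 2) H]
    (act : H →ₗ[ZMod 2] R →ₗ[ZMod 2] R) :
    H ⊗[ZMod 2] R →ₗ[ZMod 2] R :=
  TensorProduct.lift act

/-- The twist map `H ⊗ R →ₗ R ⊗ H`, `a ⊗ l ↦ Σ a'(l) ⊗ a''`. -/
noncomputable def smashTwist (R H : Type) [CommRing R] [Algebra (ZMod 2) R]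
    [Ring H] [HopfAlgebra (ZMod 2) H]
    (act : H →ₗ[ZMod 2] R →ₗ[ZMod 2] R) :
    H ⊗[ZMod 2] R →ₗ[ZMod 2] R ⊗[ZMod 2] H :=
  (TensorProduct.comm (ZMod 2) H R).toLinearMap
    ∘ₗ LinearMap.lTensor H (actT R H act)
    ∘ₗ (TensorProduct.assoc (ZMod 2) H H R).toLinearMap
    ∘ₗ LinearMap.rTensor R
        ((TensorProduct.comm (ZMod 2) H H).toLinearMap ∘ₗ Coalgebra.comul)

/-- The smash (semidirect) product multiplication on `U = R ⊗ H`: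
`(k ⊗ a)(l ⊗ b) = Σ k·a'(l) ⊗ a''·b`. -/
noncomputable def smashMul (R H : Type) [CommRing R] [Algebra (ZMod 2) R]
    [Ring H] [HopfAlgebra (ZMod 2) H]
    (act : H →ₗ[ZMod 2] R →ₗ[ZMod 2] R) :
    (R ⊗[ZMod 2] H) ⊗[ZMod 2] (R ⊗[ZMod 2] H) →ₗ[ZMod 2] R ⊗[ZMod 2] H :=
  TensorProduct.map (LinearMap.mul' (ZMod 2) R) (LinearMap.mul' (ZMod 2) H)
    ∘ₗ (TensorProduct.assoc (ZMod 2) R R (H ⊗[ZMod 2] H)).symm.toLinearMap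
    ∘ₗ LinearMap.lTensor R (TensorProduct.assoc (ZMod 2) R H H).toLinearMap
    ∘ₗ LinearMap.lTensor R (LinearMap.rTensor H (smashTwist R H act))
    ∘ₗ LinearMap.lTensor R (TensorProduct.assoc (ZMod 2) H R H).symm.toLinearMap
    ∘ₗ (TensorProduct.assoc (ZMod 2) R H (R ⊗[ZMod 2] H)).toLinearMap

/-- The inclusion `R →ₗ R ⊗ H`, `k ↦ k ⊗ 1`. -/
noncomputable def insR (R H : Type) [CommRing R] [Algebra (ZMod 2) R]
    [Ring H] [HopfAlgebra (ZMod 2) H] :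
    R →ₗ[ZMod 2] R ⊗[ZMod 2] H :=
  (TensorProduct.mk (ZMod 2) R H).flip 1

set_option maxHeartbeats 1000000
set_option synthInstance.maxHeartbeats 400000
set_option linter.unusedVariables false

section helpers
variable {R H : Type} [CommRing R] [Algebra (ZMod 2) R] [Ring H] [HopfAlgebra (ZMod 2) H]

/-- A chosen finite Sweedler representation of `comul a`. -/
noncomputable def rep (a : H) : Finset (H × H) :=
  (TensorProduct.exists_finset (R := ZMod 2) (Coalgebra.comul a)).choose

lemma rep_spec (a : H) :
    Coalgebra.comul (R := ZMod 2) a = ∑ p ∈ rep a, p.1 ⊗ₜ[ZMod 2] p.2 :=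
  (TensorProduct.exists_finset (R := ZMod 2) (Coalgebra.comul a)).choose_spec

variable (act : H →ₗ[ZMod 2] R →ₗ[ZMod 2] R)

lemma smashTwist_tmul (a : H) (l : R) :
    smashTwist R H act (a ⊗ₜ[ZMod 2] l)
      = TensorProduct.map (act.flip l) LinearMap.id (Coalgebra.comul a) := by
  have key : ∀ x : H ⊗[ZMod 2] H,
      (TensorProduct.comm (ZMod 2) H R)
        (LinearMap.lTensor H (actT R H act)
          ((TensorProduct.assoc (ZMod 2) H H R)
            (((TensorProduct.comm (ZMod 2) H H) x) ⊗ₜ[ZMod 2] l)))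
      = TensorProduct.map (act.flip l) LinearMap.id x := by
    intro x
    induction x using TensorProduct.induction_on with
    | zero => simp
    | tmul c d => simp [actT]
    | add u v hu hv => simp only [map_add, add_tmul, hu, hv]
  simpa [smashTwist] using key (Coalgebra.comul a)

lemma smashMul_tmul (k l : R) (a b : H) :
    smashMul R H act ((k ⊗ₜ[ZMod 2] a) ⊗ₜ[ZMod 2] (l ⊗ₜ[ZMod 2] b))
      = TensorProduct.map ((LinearMap.mulLeft (ZMod 2) k) ∘ₗ act.flip l)
          (LinearMap.mulRight (ZMod 2) b) (Coalgebra.comul a) := by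
  have key : ∀ x : H ⊗[ZMod 2] H,
      (TensorProduct.map (LinearMap.mul' (ZMod 2) R) (LinearMap.mul' (ZMod 2) H))
        ((TensorProduct.assoc (ZMod 2) R R (H ⊗[ZMod 2] H)).symm
          (LinearMap.lTensor R (TensorProduct.assoc (ZMod 2) R H H).toLinearMap
            (k ⊗ₜ[ZMod 2] ((TensorProduct.map (act.flip l) LinearMap.id x) ⊗ₜ[ZMod 2] b))))
      = TensorProduct.map ((LinearMap.mulLeft (ZMod 2) k) ∘ₗ act.flip l)
          (LinearMap.mulRight (ZMod 2) b) x := by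
    intro x
    induction x using TensorProduct.induction_on with
    | zero => simp
    | tmul c d => simp [LinearMap.mul'_apply]
    | add u v hu hv => simp only [map_add, add_tmul, tmul_add, hu, hv]
  have := key (Coalgebra.comul a)
  simpa [smashMul, smashTwist_tmul] using this


lemma smashMul_tmul_sum (k l : R) (a b : H) :
    smashMul R H act ((k ⊗ₜ[ZMod 2] a) ⊗ₜ[ZMod 2] (l ⊗ₜ[ZMod 2] b))
      = ∑ p ∈ rep a, (k * act p.1 l) ⊗ₜ[ZMod 2] (p.2 * b) := by
  rw [smashMul_tmul, rep_spec a, map_sum]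
  simp

/-- `(r ⊗ 1) · v = (r·) ⊗ id v`. -/
lemma smash_one_left (hact_one : act 1 = LinearMap.id) (r : R) (v : R ⊗[ZMod 2] H) :
    smashMul R H act ((r ⊗ₜ[ZMod 2] (1 : H)) ⊗ₜ[ZMod 2] v)
      = LinearMap.rTensor H (LinearMap.mulLeft (ZMod 2) r) v := by
  induction v using TensorProduct.induction_on with
  | zero => simp
  | tmul l b =>
      rw [smashMul_tmul]
      simp [Bialgebra.comul_one, Algebra.TensorProduct.one_def, hact_one]
  | add u v hu hv => simp only [map_zero, tmul_add, map_add, hu, hv]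

/-- pull `(r ⊗ 1)·` out of a product on the left -/
lemma smash_pull_left (r : R) (v w : R ⊗[ZMod 2] H) :
    smashMul R H act ((LinearMap.rTensor H (LinearMap.mulLeft (ZMod 2) r) v) ⊗ₜ[ZMod 2] w)
      = LinearMap.rTensor H (LinearMap.mulLeft (ZMod 2) r) (smashMul R H act (v ⊗ₜ[ZMod 2] w)) := by
  induction v using TensorProduct.induction_on with
  | zero => simp
  | tmul l b =>
      induction w using TensorProduct.induction_on with
      | zero => simp
      | tmul m c =>
          rw [LinearMap.rTensor_tmul, smashMul_tmul, smashMul_tmul]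
          generalize Coalgebra.comul (R := ZMod 2) b = x
          induction x using TensorProduct.induction_on with
          | zero => simp
          | tmul d e => simp [mul_assoc]
          | add u v hu hv => simp only [map_add, hu, hv]
      | add u v hu hv => simp only [tmul_add, map_add, hu, hv]
  | add u v hu hv => simp only [map_add, add_tmul, hu, hv]
lemma act_mul_right
    (halg_mul : LinearMap.mul' (ZMod 2) R
        ∘ₗ TensorProduct.map (actT R H act) (actT R H act)
        ∘ₗ (TensorProduct.tensorTensorTensorComm (ZMod 2) H H R R).toLinearMap
        ∘ₗ TensorProduct.map (Coalgebra.comul (R := ZMod 2) (A := H)) LinearMap.id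
      = actT R H act
        ∘ₗ TensorProduct.map LinearMap.id (LinearMap.mul' (ZMod 2) R))
    (c : H) (r s : R) :
    act c (r * s) = ∑ q ∈ rep c, act q.1 r * act q.2 s := by
  have h := LinearMap.congr_fun halg_mul (c ⊗ₜ[ZMod 2] (r ⊗ₜ[ZMod 2] s))
  simp only [LinearMap.comp_apply, TensorProduct.map_tmul, LinearMap.id_coe, id_eq,
    LinearMap.mul'_apply, actT, lift.tmul] at h
  rw [rep_spec c, sum_tmul, map_sum, map_sum, map_sum] at h
  simp only [LinearEquiv.coe_coe, TensorProduct.tensorTensorTensorComm_tmul,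
    TensorProduct.map_tmul, lift.tmul, LinearMap.mul'_apply] at h
  exact h.symm

lemma act_mul_left (hact_mul : ∀ a b : H, act (a * b) = act a ∘ₗ act b)
    (a b : H) (r : R) : act (a * b) r = act a (act b r) := by
  rw [hact_mul]; rfl

lemma coassoc_rep (a : H) :
    (∑ p ∈ rep a, ∑ q ∈ rep p.1, q.1 ⊗ₜ[ZMod 2] (q.2 ⊗ₜ[ZMod 2] p.2))
      = ∑ p ∈ rep a, ∑ q ∈ rep p.2, p.1 ⊗ₜ[ZMod 2] (q.1 ⊗ₜ[ZMod 2] q.2) := by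
  have h := Coalgebra.coassoc_apply (R := ZMod 2) a
  rw [rep_spec a] at h
  rw [map_sum, map_sum, map_sum] at h
  calc (∑ p ∈ rep a, ∑ q ∈ rep p.1, q.1 ⊗ₜ[ZMod 2] (q.2 ⊗ₜ[ZMod 2] p.2))
      = ∑ p ∈ rep a, (TensorProduct.assoc (ZMod 2) H H H)
          ((Coalgebra.comul (R := ZMod 2)).rTensor H (p.1 ⊗ₜ[ZMod 2] p.2)) := by
        refine Finset.sum_congr rfl fun p _ => ?_
        rw [LinearMap.rTensor_tmul, rep_spec p.1, sum_tmul, map_sum]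
        simp
    _ = ∑ p ∈ rep a, (Coalgebra.comul (R := ZMod 2)).lTensor H (p.1 ⊗ₜ[ZMod 2] p.2) := h
    _ = ∑ p ∈ rep a, ∑ q ∈ rep p.2, p.1 ⊗ₜ[ZMod 2] (q.1 ⊗ₜ[ZMod 2] q.2) := by
        refine Finset.sum_congr rfl fun p _ => ?_
        rw [LinearMap.lTensor_tmul, rep_spec p.2, tmul_sum]

lemma comul_mul_rep (a b : H) :
    Coalgebra.comul (R := ZMod 2) (a * b)
      = ∑ p ∈ rep a, ∑ t ∈ rep b, (p.1 * t.1) ⊗ₜ[ZMod 2] (p.2 * t.2) := by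
  rw [Bialgebra.comul_mul, rep_spec a, rep_spec b, Finset.sum_mul_sum]
  simp [Algebra.TensorProduct.tmul_mul_tmul]

/-- auxiliary three-fold map `u ⊗ (v ⊗ w) ↦ (f u * g v) ⊗ h w`. -/
noncomputable def T3 (f g : H →ₗ[ZMod 2] R) (h : H →ₗ[ZMod 2] H) :
    H ⊗[ZMod 2] (H ⊗[ZMod 2] H) →ₗ[ZMod 2] R ⊗[ZMod 2] H :=
  TensorProduct.map (LinearMap.mul' (ZMod 2) R) LinearMap.id
    ∘ₗ (TensorProduct.assoc (ZMod 2) R R H).symm.toLinearMap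
    ∘ₗ TensorProduct.map f (TensorProduct.map g h)

@[simp] lemma T3_tmul (f g : H →ₗ[ZMod 2] R) (h : H →ₗ[ZMod 2] H) (u v w : H) :
    T3 f g h (u ⊗ₜ[ZMod 2] (v ⊗ₜ[ZMod 2] w)) = (f u * g v) ⊗ₜ[ZMod 2] h w := by
  simp [T3]
variable (hact_one : act 1 = LinearMap.id)
    (hact_mul : ∀ a b : H, act (a * b) = act a ∘ₗ act b)
    (halg_mul : LinearMap.mul' (ZMod 2) R
        ∘ₗ TensorProduct.map (actT R H act) (actT R H act)
        ∘ₗ (TensorProduct.tensorTensorTensorComm (ZMod 2) H H R R).toLinearMap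
        ∘ₗ TensorProduct.map (Coalgebra.comul (R := ZMod 2) (A := H)) LinearMap.id
      = actT R H act
        ∘ₗ TensorProduct.map LinearMap.id (LinearMap.mul' (ZMod 2) R))

include halg_mul in
/-- associativity instance with middle factor `r ⊗ 1`. -/
lemma smash_assoc_mid (r : R) (u w : R ⊗[ZMod 2] H) :
    smashMul R H act ((smashMul R H act (u ⊗ₜ[ZMod 2] (r ⊗ₜ[ZMod 2] (1 : H)))) ⊗ₜ[ZMod 2] w)
      = smashMul R H act (u ⊗ₜ[ZMod 2]
          (LinearMap.rTensor H (LinearMap.mulLeft (ZMod 2) r) w)) := by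
  induction u using TensorProduct.induction_on with
  | zero => simp
  | tmul k a =>
      induction w using TensorProduct.induction_on with
      | zero => simp
      | tmul m c =>
          have hL : smashMul R H act
                ((smashMul R H act ((k ⊗ₜ[ZMod 2] a) ⊗ₜ[ZMod 2] (r ⊗ₜ[ZMod 2] (1 : H))))
                  ⊗ₜ[ZMod 2] (m ⊗ₜ[ZMod 2] c))
              = ∑ p ∈ rep a, ∑ q ∈ rep p.2,
                  (k * act p.1 r * act q.1 m) ⊗ₜ[ZMod 2] (q.2 * c) := by
            rw [smashMul_tmul_sum]
            simp only [mul_one]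
            rw [sum_tmul, map_sum]
            exact Finset.sum_congr rfl fun p _ => by rw [smashMul_tmul_sum]
          have hR : smashMul R H act ((k ⊗ₜ[ZMod 2] a) ⊗ₜ[ZMod 2]
                (LinearMap.rTensor H (LinearMap.mulLeft (ZMod 2) r) (m ⊗ₜ[ZMod 2] c)))
              = ∑ p ∈ rep a, ∑ q ∈ rep p.1,
                  (k * act q.1 r * act q.2 m) ⊗ₜ[ZMod 2] (p.2 * c) := by
            rw [LinearMap.rTensor_tmul, LinearMap.mulLeft_apply, smashMul_tmul_sum]
            refine Finset.sum_congr rfl fun p _ => ?_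
            rw [act_mul_right act halg_mul, Finset.mul_sum, sum_tmul]
            exact Finset.sum_congr rfl fun q _ => by rw [mul_assoc]
          rw [hL, hR]
          have key := congrArg (T3 (LinearMap.mulLeft (ZMod 2) k ∘ₗ act.flip r)
              (act.flip m) (LinearMap.mulRight (ZMod 2) c)) (coassoc_rep a)
          simp only [map_sum, T3_tmul, LinearMap.comp_apply, LinearMap.mulLeft_apply,
            LinearMap.flip_apply, LinearMap.mulRight_apply] at key
          exact key.symm
      | add w₁ w₂ h₁ h₂ => simp only [map_add, tmul_add, h₁, h₂]
  | add u₁ u₂ h₁ h₂ => simp only [map_add, add_tmul, h₁, h₂]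
include hact_mul halg_mul in
/-- associativity instance with right factor `r ⊗ 1`. -/
lemma smash_assoc_right (r : R) (u v : R ⊗[ZMod 2] H) :
    smashMul R H act ((smashMul R H act (u ⊗ₜ[ZMod 2] v)) ⊗ₜ[ZMod 2] (r ⊗ₜ[ZMod 2] (1 : H)))
      = smashMul R H act (u ⊗ₜ[ZMod 2]
          (smashMul R H act (v ⊗ₜ[ZMod 2] (r ⊗ₜ[ZMod 2] (1 : H))))) := by
  induction u using TensorProduct.induction_on with
  | zero => simp
  | tmul k a =>
      induction v using TensorProduct.induction_on with
      | zero => simp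
      | tmul l b =>
          have hL : smashMul R H act
                ((smashMul R H act ((k ⊗ₜ[ZMod 2] a) ⊗ₜ[ZMod 2] (l ⊗ₜ[ZMod 2] b)))
                  ⊗ₜ[ZMod 2] (r ⊗ₜ[ZMod 2] (1 : H)))
              = ∑ p ∈ rep a, ∑ q ∈ rep p.2, ∑ t ∈ rep b,
                  (k * act p.1 l * act q.1 (act t.1 r)) ⊗ₜ[ZMod 2] (q.2 * t.2) := by
            rw [smashMul_tmul_sum, sum_tmul, map_sum]
            refine Finset.sum_congr rfl fun p _ => ?_
            rw [smashMul_tmul, comul_mul_rep]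
            rw [map_sum]
            refine Finset.sum_congr rfl fun q _ => ?_
            rw [map_sum]
            refine Finset.sum_congr rfl fun t _ => ?_
            simp only [TensorProduct.map_tmul, LinearMap.comp_apply, LinearMap.mulLeft_apply,
              LinearMap.flip_apply, LinearMap.mulRight_apply, mul_one,
              act_mul_left act hact_mul]
          have hR : smashMul R H act ((k ⊗ₜ[ZMod 2] a) ⊗ₜ[ZMod 2]
                (smashMul R H act ((l ⊗ₜ[ZMod 2] b) ⊗ₜ[ZMod 2] (r ⊗ₜ[ZMod 2] (1 : H)))))
              = ∑ t ∈ rep b, ∑ p ∈ rep a, ∑ q ∈ rep p.1,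
                  (k * act q.1 l * act q.2 (act t.1 r)) ⊗ₜ[ZMod 2] (p.2 * t.2) := by
            rw [smashMul_tmul_sum]
            simp only [mul_one]
            rw [tmul_sum, map_sum]
            refine Finset.sum_congr rfl fun t _ => ?_
            rw [smashMul_tmul_sum]
            refine Finset.sum_congr rfl fun p _ => ?_
            rw [act_mul_right act halg_mul, Finset.mul_sum, sum_tmul]
            exact Finset.sum_congr rfl fun q _ => by rw [mul_assoc]
          rw [hL, hR]
          rw [show (∑ p ∈ rep a, ∑ q ∈ rep p.2, ∑ t ∈ rep b,
                  (k * act p.1 l * act q.1 (act t.1 r)) ⊗ₜ[ZMod 2] (q.2 * t.2))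
              = ∑ t ∈ rep b, ∑ p ∈ rep a, ∑ q ∈ rep p.2,
                  (k * act p.1 l * act q.1 (act t.1 r)) ⊗ₜ[ZMod 2] (q.2 * t.2) by
            rw [show (∑ p ∈ rep a, ∑ q ∈ rep p.2, ∑ t ∈ rep b,
                  (k * act p.1 l * act q.1 (act t.1 r)) ⊗ₜ[ZMod 2] (q.2 * t.2))
                = ∑ p ∈ rep a, ∑ t ∈ rep b, ∑ q ∈ rep p.2,
                  (k * act p.1 l * act q.1 (act t.1 r)) ⊗ₜ[ZMod 2] (q.2 * t.2) from
              Finset.sum_congr rfl fun p _ => Finset.sum_comm]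
            exact Finset.sum_comm]
          refine Finset.sum_congr rfl fun t _ => ?_
          have key := congrArg (T3 (LinearMap.mulLeft (ZMod 2) k ∘ₗ act.flip l)
              (act.flip (act t.1 r)) (LinearMap.mulRight (ZMod 2) t.2)) (coassoc_rep a)
          simp only [map_sum, T3_tmul, LinearMap.comp_apply, LinearMap.mulLeft_apply,
            LinearMap.flip_apply, LinearMap.mulRight_apply] at key
          exact key.symm
      | add v₁ v₂ h₁ h₂ => simp only [map_add, add_tmul, tmul_add, h₁, h₂]
  | add u₁ u₂ h₁ h₂ => simp only [map_add, add_tmul, h₁, h₂]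

@[simp] lemma insR_apply (r : R) : insR R H r = r ⊗ₜ[ZMod 2] (1 : H) := rfl

lemma rT_mulLeft_mul (k l' : R) (x : R ⊗[ZMod 2] H) :
    LinearMap.rTensor H (LinearMap.mulLeft (ZMod 2) k)
      (LinearMap.rTensor H (LinearMap.mulLeft (ZMod 2) l') x)
    = LinearMap.rTensor H (LinearMap.mulLeft (ZMod 2) (k * l')) x := by
  induction x using TensorProduct.induction_on with
  | zero => simp
  | tmul r b => simp [mul_assoc]
  | add u v hu hv => simp only [map_add, hu, hv]

include hact_one in
lemma Psi_eq (φ : H →ₗ[ZMod 2] R ⊗[ZMod 2] H) (l : R) (a : H) :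
    (smashMul R H act ∘ₗ TensorProduct.map (insR R H ∘ₗ act.flip l) φ
        ∘ₗ Coalgebra.comul (R := ZMod 2)) a
      = ∑ p ∈ rep a,
          LinearMap.rTensor H (LinearMap.mulLeft (ZMod 2) (act p.1 l)) (φ p.2) := by
  simp only [LinearMap.comp_apply]
  rw [rep_spec a, map_sum, map_sum]
  refine Finset.sum_congr rfl fun p _ => ?_
  simp only [TensorProduct.map_tmul, LinearMap.comp_apply, LinearMap.flip_apply, insR_apply]
  exact smash_one_left act hact_one _ _

end helpers

/-- Let `φ : A(1) → U = R ⊗ A(1)` be the algebra homomorphism with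
`φ(Sq¹) = 1⊗Sq¹ + i1⊗1` and `φ(Sq²) = 1⊗Sq² + i1⊗Sq¹ + i1²⊗1 + i2⊗1` (here
`H` stands for `A(1)`, a cocommutative Hopf algebra generated by `sq1, sq2`,
acting on `R = F₂[i1,i2]`).  Then for every `a ∈ A(1)` and `l ∈ R` the identity
`φ(a)·(l ⊗ 1) = Σ (a'(l) ⊗ 1)·φ(a'')` holds (for `Δ(a) = Σ a' ⊗ a''`); in
particular the extension of `φ` by the identity on `R`,
`Φ(k ⊗ a) := (k ⊗ 1)·φ(a)`, is multiplicative. -/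
theorem phi_commutation_and_extension_multiplicative
    (R H : Type) [CommRing R] [Algebra (ZMod 2) R]
    [Ring H] [HopfAlgebra (ZMod 2) H]
    (hcocomm : (TensorProduct.comm (ZMod 2) H H).toLinearMap ∘ₗ Coalgebra.comul
      = (Coalgebra.comul : H →ₗ[ZMod 2] H ⊗[ZMod 2] H))
    (act : H →ₗ[ZMod 2] R →ₗ[ZMod 2] R)
    (hact_one : act 1 = LinearMap.id)
    (hact_mul : ∀ a b : H, act (a * b) = act a ∘ₗ act b)
    (halg_one : ∀ a : H, act a 1 = Coalgebra.counit (R := ZMod 2) a • (1 : R))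
    (halg_mul : LinearMap.mul' (ZMod 2) R
        ∘ₗ TensorProduct.map (actT R H act) (actT R H act)
        ∘ₗ (TensorProduct.tensorTensorTensorComm (ZMod 2) H H R R).toLinearMap
        ∘ₗ TensorProduct.map (Coalgebra.comul (R := ZMod 2) (A := H)) LinearMap.id
      = actT R H act
        ∘ₗ TensorProduct.map LinearMap.id (LinearMap.mul' (ZMod 2) R))
    -- the generators `Sq¹, Sq²` of `A(1)` and the classes `i1, i2` of `R`
    (sq1 sq2 : H) (i1 i2 : R)
    (hgen : Algebra.adjoin (ZMod 2) {sq1, sq2} = ⊤)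
    (hcomul_sq1 : Coalgebra.comul (R := ZMod 2) sq1 = sq1 ⊗ₜ 1 + 1 ⊗ₜ sq1)
    (hcomul_sq2 : Coalgebra.comul (R := ZMod 2) sq2
      = sq2 ⊗ₜ 1 + sq1 ⊗ₜ sq1 + 1 ⊗ₜ sq2)
    -- the homomorphism `φ : A(1) → U`
    (φ : H →ₗ[ZMod 2] R ⊗[ZMod 2] H)
    (hφ_one : φ 1 = (1 : R) ⊗ₜ (1 : H))
    (hφ_mul : ∀ a b : H, φ (a * b) = smashMul R H act (φ a ⊗ₜ φ b))
    (hφ_sq1 : φ sq1 = i1 ⊗ₜ 1 + 1 ⊗ₜ sq1)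
    (hφ_sq2 : φ sq2 = (i1 ^ 2 + i2) ⊗ₜ 1 + i1 ⊗ₜ sq1 + 1 ⊗ₜ sq2) :
    (∀ (a : H) (l : R),
      smashMul R H act (φ a ⊗ₜ (l ⊗ₜ (1 : H)))
        = (smashMul R H act
            ∘ₗ TensorProduct.map (insR R H ∘ₗ act.flip l) φ
            ∘ₗ Coalgebra.comul (R := ZMod 2)) a) ∧
    (∀ u v : R ⊗[ZMod 2] H,
      (smashMul R H act ∘ₗ TensorProduct.map (insR R H) φ)
        (smashMul R H act (u ⊗ₜ v))
      = smashMul R H act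
          (((smashMul R H act ∘ₗ TensorProduct.map (insR R H) φ) u) ⊗ₜ
            ((smashMul R H act ∘ₗ TensorProduct.map (insR R H) φ) v))) := by

  classical
  have part1 : ∀ (a : H) (l : R),
      smashMul R H act (φ a ⊗ₜ (l ⊗ₜ (1 : H)))
        = (smashMul R H act
            ∘ₗ TensorProduct.map (insR R H ∘ₗ act.flip l) φ
            ∘ₗ Coalgebra.comul (R := ZMod 2)) a := by
    intro a
    have ha : a ∈ Algebra.adjoin (ZMod 2) ({sq1, sq2} : Set H) := by
      rw [hgen]; exact Algebra.mem_top
    induction ha using Algebra.adjoin_induction with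
    | mem x hx =>
        rcases hx with rfl | rfl
        · -- sq1
          intro l
          simp only [LinearMap.comp_apply, hφ_sq1, hφ_sq2, hcomul_sq1, hcomul_sq2, hφ_one,
            add_tmul, tmul_add, map_add, TensorProduct.map_tmul, LinearMap.flip_apply,
            insR_apply, smashMul_tmul, Bialgebra.comul_one, Algebra.TensorProduct.one_def,
            hact_one, LinearMap.id_coe, id_eq, LinearMap.mulLeft_apply,
            LinearMap.mulRight_apply, mul_one, one_mul]
          rw [mul_comm l i1]
          abel
        · -- sq2
          intro l
          simp only [LinearMap.comp_apply, hφ_sq1, hφ_sq2, hcomul_sq1, hcomul_sq2, hφ_one,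
            add_tmul, tmul_add, map_add, TensorProduct.map_tmul, LinearMap.flip_apply,
            insR_apply, smashMul_tmul, Bialgebra.comul_one, Algebra.TensorProduct.one_def,
            hact_one, LinearMap.id_coe, id_eq, LinearMap.mulLeft_apply,
            LinearMap.mulRight_apply, mul_one, one_mul]
          simp only [mul_comm l i1, mul_comm l i2, mul_comm l (i1 ^ 2),
            mul_comm ((act sq1) l) i1]
          abel
    | algebraMap r =>
        have h01 : ∀ x : ZMod 2, x = 0 ∨ x = 1 := by decide
        rcases h01 r with rfl | rfl
        · intro l
          simp only [map_zero, zero_tmul]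
        · intro l
          simp only [map_one]
          simp only [LinearMap.comp_apply, hφ_sq1, hφ_sq2, hcomul_sq1, hcomul_sq2, hφ_one,
            add_tmul, tmul_add, map_add, TensorProduct.map_tmul, LinearMap.flip_apply,
            insR_apply, smashMul_tmul, Bialgebra.comul_one, Algebra.TensorProduct.one_def,
            hact_one, LinearMap.id_coe, id_eq, LinearMap.mulLeft_apply,
            LinearMap.mulRight_apply, mul_one, one_mul]
    | add x y hx hy px py =>
        intro l
        simp only [map_add, add_tmul, px l, py l]
    | mul x y hx hy px py =>
        intro l
        rw [hφ_mul x y, smash_assoc_right act hact_mul halg_mul l (φ x) (φ y),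
          py l, Psi_eq act hact_one φ l y, tmul_sum, map_sum]
        -- RHS
        simp only [LinearMap.comp_apply]
        rw [comul_mul_rep x y]
        simp only [map_sum]
        rw [Finset.sum_comm]
        refine Finset.sum_congr rfl fun t _ => ?_
        -- LHS term
        rw [← smash_assoc_mid act halg_mul (act t.1 l) (φ x) (φ t.2)]
        rw [px (act t.1 l), Psi_eq act hact_one φ (act t.1 l) x, sum_tmul, map_sum]
        refine Finset.sum_congr rfl fun p _ => ?_
        rw [smash_pull_left, ← hφ_mul]
        simp only [TensorProduct.map_tmul, LinearMap.comp_apply, LinearMap.flip_apply,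
          insR_apply]
        rw [smash_one_left act hact_one, act_mul_left act hact_mul]
  refine ⟨part1, ?_⟩
  intro u v
  induction u using TensorProduct.induction_on with
  | zero => simp
  | tmul k a =>
      induction v using TensorProduct.induction_on with
      | zero => simp
      | tmul l b =>
          simp only [LinearMap.comp_apply, TensorProduct.map_tmul, insR_apply]
          rw [smash_one_left act hact_one, smash_one_left act hact_one]
          rw [smashMul_tmul_sum, map_sum]
          rw [smash_pull_left, ← smash_assoc_mid act halg_mul l (φ a) (φ b),
            part1 a l, Psi_eq act hact_one φ l a, sum_tmul, map_sum, map_sum]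
          rw [map_sum]
          refine Finset.sum_congr rfl fun p _ => ?_
          simp only [TensorProduct.map_tmul, insR_apply]
          rw [smash_one_left act hact_one, smash_pull_left, rT_mulLeft_mul, ← hφ_mul]
      | add v₁ v₂ h₁ h₂ => simp only [map_add, tmul_add, h₁, h₂]
  | add u₁ u₂ h₁ h₂ => simp only [map_add, add_tmul, h₁, h₂]
end

section
/- The homomorphism φ: A(1) → U with φ(Sq^1) = 1⊗Sq^1 + i1⊗1 and φ(Sq^2) = 1⊗Sq^2 + i1⊗Sq^1 + i1^2⊗1 + i2⊗1 is a morphism of coalgebras: Δ(φ(Sq^1)) = (φ⊗φ)(Δ(Sq^1)) and Δ(φ(Sq^2)) = (φ⊗φ)(Δ(Sq^2)). -/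
open TensorProduct

/-- The homomorphism `φ : A(1) → U` with `φ(Sq¹) = 1⊗Sq¹ + i1⊗1`
and `φ(Sq²) = 1⊗Sq² + i1⊗Sq¹ + i1²⊗1 + i2⊗1` is a morphism of coalgebras:
`Δ(φ(Sq¹)) = (φ⊗φ)(Δ(Sq¹))` and `Δ(φ(Sq²)) = (φ⊗φ)(Δ(Sq²))`.
Here the twisted Steenrod algebra `U = R ⊗ H` (with `H = A(1)`, having
`Δ(Sq¹) = Sq¹⊗1 + 1⊗Sq¹`, `Δ(Sq²) = Sq²⊗1 + Sq¹⊗Sq¹ + 1⊗Sq²`) carries the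
tensor product coalgebra structure, where `R = F₂[i1,i2]` has
`Δ(i1) = i1⊗1 + 1⊗i1` and `Δ(i2) = i2⊗1 + i1⊗i1 + 1⊗i2`. -/
theorem phi_coalgebra_morphism_on_generators
    (R H : Type) [CommRing R] [Algebra (ZMod 2) R]
    [Ring H] [HopfAlgebra (ZMod 2) H]
    (sq1 sq2 : H) (i1 i2 : R)
    -- the coproduct of `R`
    (comulR : R →ₐ[ZMod 2] R ⊗[ZMod 2] R)
    (hcomulR_i1 : comulR i1 = i1 ⊗ₜ 1 + 1 ⊗ₜ i1)
    (hcomulR_i2 : comulR i2 = i2 ⊗ₜ 1 + i1 ⊗ₜ i1 + 1 ⊗ₜ i2)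
    -- the coproduct of `A(1)` on the generators
    (hcomul_sq1 : Coalgebra.comul (R := ZMod 2) sq1 = sq1 ⊗ₜ 1 + 1 ⊗ₜ sq1)
    (hcomul_sq2 : Coalgebra.comul (R := ZMod 2) sq2
      = sq2 ⊗ₜ 1 + sq1 ⊗ₜ sq1 + 1 ⊗ₜ sq2)
    -- the homomorphism `φ`
    (φ : H →ₗ[ZMod 2] R ⊗[ZMod 2] H)
    (hφ_one : φ 1 = (1 : R) ⊗ₜ (1 : H))
    (hφ_sq1 : φ sq1 = i1 ⊗ₜ 1 + 1 ⊗ₜ sq1)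
    (hφ_sq2 : φ sq2 = (i1 ^ 2 + i2) ⊗ₜ 1 + i1 ⊗ₜ sq1 + 1 ⊗ₜ sq2) :
    -- `Δ_U := (1 ⊗ swap ⊗ 1) ∘ (Δ_R ⊗ Δ_H)` is the coproduct of `U = R ⊗ H`
    (((TensorProduct.tensorTensorTensorComm (ZMod 2) R R H H).toLinearMap
        ∘ₗ TensorProduct.map comulR.toLinearMap (Coalgebra.comul (R := ZMod 2)))
          (φ sq1)
      = TensorProduct.map φ φ (Coalgebra.comul (R := ZMod 2) sq1)) ∧
    (((TensorProduct.tensorTensorTensorComm (ZMod 2) R R H H).toLinearMap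
        ∘ₗ TensorProduct.map comulR.toLinearMap (Coalgebra.comul (R := ZMod 2)))
          (φ sq2)
      = TensorProduct.map φ φ (Coalgebra.comul (R := ZMod 2) sq2)) := by
  have char2 : ∀ x : R ⊗[ZMod 2] R, x + x = 0 := fun x => by
    rw [← two_smul (ZMod 2) x, show (2 : ZMod 2) = 0 from rfl, zero_smul]
  have hone : comulR 1 = (1 : R) ⊗ₜ (1 : R) := by
    rw [map_one, Algebra.TensorProduct.one_def]
  have honeH : Coalgebra.comul (R := ZMod 2) (1 : H) = (1 : H) ⊗ₜ (1 : H) := by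
    rw [Bialgebra.comul_one, Algebra.TensorProduct.one_def]
  have hsq : comulR (i1 ^ 2) = (i1 ^ 2) ⊗ₜ (1 : R) + (1 : R) ⊗ₜ (i1 ^ 2) := by
    rw [map_pow, hcomulR_i1, sq, add_mul, mul_add, mul_add,
      Algebra.TensorProduct.tmul_mul_tmul, Algebra.TensorProduct.tmul_mul_tmul,
      Algebra.TensorProduct.tmul_mul_tmul, Algebra.TensorProduct.tmul_mul_tmul,
      mul_one, one_mul, ← sq]
    simp only [mul_one]
    rw [add_assoc, ← add_assoc (i1 ⊗ₜ[ZMod 2] i1), char2, zero_add]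
  constructor
  · simp only [LinearMap.comp_apply, hφ_sq1, map_add, TensorProduct.map_tmul,
      AlgHom.toLinearMap_apply, hone, honeH, hcomulR_i1, hcomul_sq1, hφ_one,
      add_tmul, tmul_add, LinearEquiv.coe_coe, tensorTensorTensorComm_tmul]
    abel
  · simp only [LinearMap.comp_apply, hφ_sq2, map_add, TensorProduct.map_tmul,
      AlgHom.toLinearMap_apply, hone, honeH, hcomulR_i1, hcomulR_i2, hsq,
      hcomul_sq1, hcomul_sq2, hφ_one, hφ_sq1, add_tmul, tmul_add,
      LinearEquiv.coe_coe, tensorTensorTensorComm_tmul]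
    abel
end
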